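/- For every n ≥ 4, the maximum cardinality of an independent set of the graph G_n equals ⌊n/2⌋. (This is the isolate-region number of the standard projection of the (2,n)-torus link.) -/

import Mathlib

/-- The region-connect graph `G_n` of the standard projection `T(2,n)` of the
`(2,n)`-torus link: vertices are the `n + 2` regions; two distinct vertices `i, j` are
adjacent iff `i ≥ n`, or `j ≥ n`, or both `i, j < n` and `j ≡ i + 1` or `j ≡ i - 1`
(mod `n`). -/
def torusGraph (n : ℕ) : SimpleGraph (Fin (n + 2)) where
  Adj i j := i ≠ j ∧ (n ≤ (i : ℕ) ∨ n ≤ (j : ℕ) ∨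
    ((i : ℕ) < n ∧ (j : ℕ) < n ∧
      ((j : ℕ) = ((i : ℕ) + 1) % n ∨ (i : ℕ) = ((j : ℕ) + 1) % n)))
  symm := by
    constructor
    intro i j ⟨hne, h⟩
    exact ⟨hne.symm, by tauto⟩
  loopless := by
    constructor
    intro i ⟨hne, _⟩
    exact hne rfl

instance (n : ℕ) : DecidableRel (torusGraph n).Adj := fun i j =>
  inferInstanceAs (Decidable (i ≠ j ∧ (n ≤ (i : ℕ) ∨ n ≤ (j : ℕ) ∨
    ((i : ℕ) < n ∧ (j : ℕ) < n ∧
      ((j : ℕ) = ((i : ℕ) + 1) % n ∨ (i : ℕ) = ((j : ℕ) + 1) % n)))))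

/-- A finite set of vertices is independent iff no two of its elements are adjacent. -/
def IsIndepFinset (n : ℕ) (S : Finset (Fin (n + 2))) : Prop :=
  ∀ i ∈ S, ∀ j ∈ S, ¬ (torusGraph n).Adj i j

instance (n : ℕ) : DecidablePred (IsIndepFinset n) := fun S =>
  inferInstanceAs (Decidable (∀ i ∈ S, ∀ j ∈ S, ¬ (torusGraph n).Adj i j))

/-! An independent set of the `n`-cycle is disjoint from its rotation by one step, and both
lie among the `n` cycle vertices, so it has at most `n / 2` elements; a vertex outside the
cycle is adjacent to everything else, so it can only form an independent set on its own.
The even cycle vertices `0, 2, …, 2 (n / 2 - 1)` realise the bound. -/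

open Finset

theorem Finset.two_mul_card_le_of_disjoint_image {α : Type*} [DecidableEq α]
    {s t : Finset α} {f : α → α} (hf : Set.InjOn f s) (hdisj : Disjoint s (s.image f))
    (hsub : s ∪ s.image f ⊆ t) : 2 * #s ≤ #t :=
  calc 2 * #s = #(s ∪ s.image f) := by
        rw [card_union_of_disjoint hdisj, card_image_of_injOn hf, two_mul]
    _ ≤ #t := card_le_card hsub

theorem Nat.injOn_add_one_mod (n : ℕ) : Set.InjOn (fun a => (a + 1) % n) {a | a < n} :=
  fun _ ha _ hb h => (Nat.ModEq.add_right_cancel' 1 h).eq_of_lt_of_lt ha hb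

theorem Nat.add_one_mod_ne_self {n a : ℕ} (hn : 2 ≤ n) (ha : a < n) : (a + 1) % n ≠ a := by
  obtain h | h : a + 1 < n ∨ a + 1 = n := by omega
  · rw [Nat.mod_eq_of_lt h]; omega
  · rw [h, Nat.mod_self]; omega

namespace IsIndepFinset

variable {n : ℕ} {S : Finset (Fin (n + 2))}

theorem card_le_one_of_le_val (hS : IsIndepFinset n S) {v : Fin (n + 2)} (hv : v ∈ S)
    (hnv : n ≤ (v : ℕ)) : #S ≤ 1 :=
  card_le_one.2 fun i hi j hj => by
    by_contra hij
    by_cases hiv : i = v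
    · exact hS v hv j hj ⟨hiv ▸ hij, .inl hnv⟩
    · exact hS i hi v hv ⟨hiv, .inr (.inl hnv)⟩

theorem two_mul_card_le (hn : 2 ≤ n) (hS : IsIndepFinset n S)
    (hlt : ∀ i ∈ S, (i : ℕ) < n) : 2 * #S ≤ n := by
  set A := S.image Fin.val
  have hA : ∀ a ∈ A, a < n := by
    simpa [A] using hlt
  have hdisj : Disjoint A (A.image fun a => (a + 1) % n) := by
    refine disjoint_right.2 fun x hx hxA => ?_
    obtain ⟨i, hi, rfl⟩ := mem_image.1 hx
    obtain ⟨j, hj, hji⟩ := mem_image.1 hxA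
    obtain ⟨i, hiS, rfl⟩ := mem_image.1 hi
    have hin := hlt i hiS
    have hij : i ≠ j := fun h => Nat.add_one_mod_ne_self hn hin (by rw [← hji, h])
    exact hS i hiS j hj ⟨hij, .inr (.inr ⟨hin, hlt j hj, .inl hji⟩)⟩
  have hsub : A ∪ A.image (fun a => (a + 1) % n) ⊆ range n := by
    intro x hx
    rcases mem_union.1 hx with hx | hx
    · exact mem_range.2 (hA x hx)
    · obtain ⟨a, -, rfl⟩ := mem_image.1 hx
      exact mem_range.2 (Nat.mod_lt _ (by omega))
  have hcard : #A = #S := card_image_of_injective S Fin.val_injective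
  have := two_mul_card_le_of_disjoint_image
    ((Nat.injOn_add_one_mod n).mono hA) hdisj hsub
  rwa [hcard, card_range] at this

theorem card_le_half (hn : 2 ≤ n) (hS : IsIndepFinset n S) : #S ≤ n / 2 := by
  by_cases hhigh : ∃ v ∈ S, n ≤ (v : ℕ)
  · obtain ⟨v, hv, hnv⟩ := hhigh
    have := hS.card_le_one_of_le_val hv hnv
    omega
  · push Not at hhigh
    have := hS.two_mul_card_le hn hhigh
    omega

end IsIndepFinset

def evenVertex (n : ℕ) : Fin (n / 2) ↪ Fin (n + 2) where
  toFun k := ⟨2 * k, by omega⟩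
  inj' k l h := by simpa [Fin.ext_iff] using h

@[simp]
theorem evenVertex_val (n : ℕ) (k : Fin (n / 2)) : (evenVertex n k : ℕ) = 2 * k := rfl

theorem isIndepFinset_map_evenVertex (n : ℕ) :
    IsIndepFinset n (univ.map (evenVertex n)) := by
  simp only [IsIndepFinset, mem_map, mem_univ, true_and, forall_exists_index,
    forall_apply_eq_imp_iff]
  rintro k l ⟨hkl, h⟩
  have hk : 2 * (k : ℕ) + 1 < n := by omega
  have hl : 2 * (l : ℕ) + 1 < n := by omega
  rw [ne_eq, ← Fin.val_inj] at hkl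
  simp only [evenVertex_val, Nat.mod_eq_of_lt hk, Nat.mod_eq_of_lt hl] at hkl h
  omega

/-- For every `n ≥ 4`, the maximum cardinality of an independent set of `G_n`, i.e. the
isolate-region number of the standard projection of the `(2,n)`-torus link, is `⌊n/2⌋`. -/
theorem torus_isolate_region_number (n : ℕ) (hn : 4 ≤ n) :
    ((Finset.univ : Finset (Finset (Fin (n + 2)))).filter (IsIndepFinset n)).sup
        Finset.card = n / 2 := by
  refine le_antisymm (Finset.sup_le fun S hS => (mem_filter.1 hS).2.card_le_half (by omega)) ?_
  refine le_sup_of_le (b := univ.map (evenVertex n))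
    (mem_filter.2 ⟨mem_univ _, isIndepFinset_map_evenVertex n⟩) ?_
  rw [card_map, card_univ, Fintype.card_fin]
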